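/- arXiv:2507.02553 — 2 statements merged into one kernel-verified Lean document; each statement's English description precedes it below -/
import Mathlib

section
/- If α ≠ 0, then for every λ ∈ ℂ*, β, γ ∈ ℂ and h(t) ∈ ℂ[t], the 𝔏-module Φ(λ,α,β,γ,h(t)) is irreducible (i.e., it has no 𝔏-submodules other than 0 and itself). -/
noncomputable section

/-- The polynomial ring `ℂ[s,t]`; variable `0` is `s`, variable `1` is `t`. -/
abbrev P2 : Type := MvPolynomial (Fin 2) ℂ

/-- The shift operator `f(s,t) ↦ f(s-m,t)` on `ℂ[s,t]`. -/
def shiftS (m : ℤ) : Module.End ℂ P2 :=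
  (MvPolynomial.aeval ![MvPolynomial.X 0 - MvPolynomial.C (m : ℂ), MvPolynomial.X 1] :
    P2 →ₐ[ℂ] P2).toLinearMap

/-- Multiplication by a polynomial, as a linear endomorphism of `ℂ[s,t]`. -/
def mulOp (p : P2) : Module.End ℂ P2 := LinearMap.mulLeft ℂ p

/-- The partial derivative `∂/∂t` on `ℂ[s,t]`. -/
def dT : Module.End ℂ P2 := (MvPolynomial.pderiv (1 : Fin 2)).toLinearMap

/-- The embedding `ℂ[t] → ℂ[s,t]`, `t ↦` variable `1`. -/
def toT (p : Polynomial ℂ) : P2 := Polynomial.aeval (MvPolynomial.X 1 : P2) p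

/-- The polynomial quotient `(h(t) - h(α)) / (t - α)`. -/
def hq (al : ℂ) (h : Polynomial ℂ) : Polynomial ℂ :=
  Polynomial.divByMonic (h - Polynomial.C (Polynomial.eval al h))
    (Polynomial.X - Polynomial.C al)

/-- `h_m(t) = m h(t) - m (m-1) α (h(t) - h(α))/(t - α)`. -/
def hmPoly (al : ℂ) (h : Polynomial ℂ) (m : ℤ) : Polynomial ℂ :=
  (m : ℂ) • h - ((m : ℂ) * ((m : ℂ) - 1) * al) • hq al h

/-- The action of `L_m` on `Φ(λ,α,β,γ,h)`:
`L_m · f = λ^m (s + h_m(t)) f(s-m,t) - m λ^m (t - mα) ∂_t(f(s-m,t))`. -/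
def opL (lam al : ℂ) (h : Polynomial ℂ) (m : ℤ) : Module.End ℂ P2 :=
  lam ^ m • (mulOp (MvPolynomial.X 0 + toT (hmPoly al h m)) * shiftS m)
    - ((m : ℂ) * lam ^ m) •
        (mulOp (MvPolynomial.X 1 - MvPolynomial.C ((m : ℂ) * al)) * (dT * shiftS m))

/-- The action of `M_m` on `Φ(λ,α,β,γ,h)`: `M_m · f = λ^m (t - mα) f(s-m,t)`. -/
def opM (lam al : ℂ) (m : ℤ) : Module.End ℂ P2 :=
  lam ^ m • (mulOp (MvPolynomial.X 1 - MvPolynomial.C ((m : ℂ) * al)) * shiftS m)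

/-- The action of `S_m` on `Φ(λ,α,β,γ,h)`: `S_m · f = λ^m β f(s-m,t)`. -/
def opS (lam be : ℂ) (m : ℤ) : Module.End ℂ P2 :=
  (lam ^ m * be) • shiftS m

/-- The action of `I_m` on `Φ(λ,α,β,γ,h)`:
`I_m · f = λ^m (γ - m β (h(t)-h(α))/(t-α)) f(s-m,t) + m λ^m β ∂_t(f(s-m,t))`. -/
def opI (lam al be ga : ℂ) (h : Polynomial ℂ) (m : ℤ) : Module.End ℂ P2 :=
  lam ^ m •
      (mulOp (MvPolynomial.C ga - MvPolynomial.C ((m : ℂ) * be) * toT (hq al h)) * shiftS m)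
    + ((m : ℂ) * lam ^ m * be) • (dT * shiftS m)



section ShiftPoly

open Polynomial

lemma shift_poly_key {R : Type*} [CommRing R] [IsDomain R] [CharZero R]
    (p : R[X]) (hp : 0 < p.natDegree) :
    p.comp (X - C 1) - p ≠ 0 ∧ (p.comp (X - C 1) - p).natDegree < p.natDegree := by
  set q := p.comp (X - C 1) with hq
  have hdq : q.natDegree = p.natDegree := by
    rw [hq, natDegree_comp, natDegree_X_sub_C, mul_one]
  have hlq : q.leadingCoeff = p.leadingCoeff := by
    rw [hq, leadingCoeff_comp (by rw [natDegree_X_sub_C]; norm_num), leadingCoeff_X_sub_C,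
      one_pow, mul_one]
  have hne : q - p ≠ 0 := by
    intro hzero
    have hqp : q = p := by linear_combination (norm := ring_nf) hzero
    have heval : ∀ x : R, p.eval (x - 1) = p.eval x := by
      intro x
      have h3 := congrArg (Polynomial.eval x) hqp
      rw [hq, eval_comp] at h3
      simpa using h3
    have hroot : ∀ n : ℕ, p.eval (-(n:R)) = p.eval 0 := by
      intro n
      induction n with
      | zero => simp
      | succ k ih => rw [← ih]; have h4 := heval (-(k:R)); push_cast; rw [← h4]; ring_nf
    have hinf : Set.Infinite {x : R | (p - C (p.eval 0)).IsRoot x} := by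
      apply Set.infinite_of_injective_forall_mem (f := fun n : ℕ => -(n:R))
      · intro a b hab
        simpa using hab
      · intro n
        simp [Polynomial.IsRoot, hroot n]
    have h5 := Polynomial.eq_zero_of_infinite_isRoot _ hinf
    have hpc : p = C (p.eval 0) := by linear_combination (norm := ring_nf) h5
    rw [hpc] at hp
    simp at hp
  refine ⟨hne, ?_⟩
  have hcoeff : (q - p).coeff p.natDegree = 0 := by
    have h1 : q.coeff p.natDegree = q.leadingCoeff := by rw [leadingCoeff, hdq]
    have h2 : p.coeff p.natDegree = p.leadingCoeff := rfl
    simp [coeff_sub, h1, h2, hlq]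
  have hle : (q - p).natDegree ≤ p.natDegree := by
    refine le_trans (natDegree_sub_le q p) ?_
    simp [hdq]
  rcases lt_or_eq_of_le hle with hcase | hcase
  · exact hcase
  · exfalso
    apply hne
    have h6 : (q - p).leadingCoeff = 0 := by rw [Polynomial.leadingCoeff, hcase]; exact hcoeff
    exact Polynomial.leadingCoeff_eq_zero.mp h6

end ShiftPoly

section AuxLemmas

open MvPolynomial

abbrev R1 : Type := MvPolynomial (Fin 1) ℂ

noncomputable abbrev phi2 : P2 ≃ₐ[ℂ] Polynomial R1 := MvPolynomial.finSuccEquiv ℂ 1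

lemma shiftS_shiftS (m n : ℤ) (f : P2) : shiftS m (shiftS n f) = shiftS (m+n) f := by
  have h : ((MvPolynomial.aeval ![X 0 - C (m:ℂ), X 1] : P2 →ₐ[ℂ] P2).comp
      (MvPolynomial.aeval ![X 0 - C (n:ℂ), X 1])) =
      (MvPolynomial.aeval ![X 0 - C ((m+n : ℤ):ℂ), X 1]) := by
    apply MvPolynomial.algHom_ext
    intro i
    fin_cases i <;> simp <;> push_cast <;> ring
  calc shiftS m (shiftS n f) = ((MvPolynomial.aeval ![X 0 - C (m:ℂ), X 1] : P2 →ₐ[ℂ] P2).comp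
      (MvPolynomial.aeval ![X 0 - C (n:ℂ), X 1])) f := rfl
    _ = shiftS (m+n) f := by rw [h]; rfl

lemma shiftS_zero (f : P2) : shiftS 0 f = f := by
  have h : (MvPolynomial.aeval ![X 0 - C ((0:ℤ):ℂ), X 1] : P2 →ₐ[ℂ] P2) = AlgHom.id ℂ P2 := by
    apply MvPolynomial.algHom_ext
    intro i
    fin_cases i <;> simp
  calc shiftS 0 f = (MvPolynomial.aeval ![X 0 - C ((0:ℤ):ℂ), X 1] : P2 →ₐ[ℂ] P2) f := rfl
    _ = f := by rw [h]; rfl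

lemma shiftS_mul (m : ℤ) (p q : P2) : shiftS m (p * q) = shiftS m p * shiftS m q :=
  map_mul (MvPolynomial.aeval ![X 0 - C (m:ℂ), X 1] : P2 →ₐ[ℂ] P2) p q

lemma shiftS_X1 (m : ℤ) : shiftS m (X 1) = X 1 := by simp [shiftS]

lemma shiftS_C (m : ℤ) (c : ℂ) : shiftS m (C c) = C c := by
  simp [shiftS, MvPolynomial.algHom_C]

lemma phi2_X1 : phi2 (X 1) = Polynomial.C (X 0) := by
  have h : (1 : Fin 2) = Fin.succ 0 := rfl
  rw [h, finSuccEquiv_X_succ]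

lemma phi2_shift (f : P2) :
    phi2 (shiftS 1 f) = (phi2 f).comp (Polynomial.X - Polynomial.C 1) := by
  have key : (phi2.toAlgHom.comp (MvPolynomial.aeval ![X 0 - C ((1:ℤ):ℂ), X 1] : P2 →ₐ[ℂ] P2)) =
      (((Polynomial.aeval (Polynomial.X - Polynomial.C 1 : Polynomial R1)).restrictScalars ℂ).comp
        phi2.toAlgHom) := by
    apply MvPolynomial.algHom_ext
    intro i
    fin_cases i
    · simp [finSuccEquiv_X_zero]
    · simp [phi2_X1]
  have h2 := congrFun (congrArg (fun g => g.toFun) key) f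
  simp only [AlgHom.toFun_eq_coe, AlgHom.coe_comp, Function.comp_apply,
    AlgHom.coe_restrictScalars] at h2
  rw [show shiftS 1 f = (MvPolynomial.aeval ![X 0 - C ((1:ℤ):ℂ), X 1] : P2 →ₐ[ℂ] P2) f from rfl]
  rw [show phi2.toAlgHom f = phi2 f from rfl] at h2
  rw [show phi2.toAlgHom ((MvPolynomial.aeval ![X 0 - C ((1:ℤ):ℂ), X 1] : P2 →ₐ[ℂ] P2) f)
    = phi2 ((MvPolynomial.aeval ![X 0 - C ((1:ℤ):ℂ), X 1] : P2 →ₐ[ℂ] P2) f) from rfl] at h2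
  rw [h2]
  simp [Polynomial.comp_eq_aeval]

lemma shift_key (f : P2) (hpos : 0 < degreeOf 0 f) :
    shiftS 1 f - f ≠ 0 ∧ degreeOf 0 (shiftS 1 f - f) < degreeOf 0 f := by
  have hnd : (phi2 f).natDegree = degreeOf 0 f := natDegree_finSuccEquiv f
  have hppos : 0 < (phi2 f).natDegree := by omega
  obtain ⟨hne', hlt⟩ := shift_poly_key (phi2 f) hppos
  have heq : phi2 (shiftS 1 f - f)
      = (phi2 f).comp (Polynomial.X - Polynomial.C 1) - phi2 f := by
    rw [map_sub, phi2_shift]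
  constructor
  · intro h0
    apply hne'
    rw [← heq, h0, map_zero]
  · have h7 : degreeOf 0 (shiftS 1 f - f) = (phi2 (shiftS 1 f - f)).natDegree :=
      (natDegree_finSuccEquiv _).symm
    rw [h7, heq]
    omega

lemma aeval_X0_surj : Function.Surjective (Polynomial.aeval (X 0 : R1) : Polynomial ℂ → R1) := by
  intro a
  induction a using MvPolynomial.induction_on with
  | C c => exact ⟨Polynomial.C c, by simp⟩
  | add p q hp hq =>
    obtain ⟨p', hp'⟩ := hp; obtain ⟨q', hq'⟩ := hq
    exact ⟨p' + q', by simp [hp', hq']⟩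
  | mul_X p n hp =>
    obtain ⟨p', hp'⟩ := hp
    exact ⟨p' * Polynomial.X, by simp [hp', Fin.eq_zero n]⟩

lemma repr_t (f : P2) (hf : degreeOf 0 f = 0) : ∃ p : Polynomial ℂ, f = toT p := by
  have hnd : (phi2 f).natDegree = 0 := by rw [natDegree_finSuccEquiv, hf]
  obtain ⟨a, ha⟩ := Polynomial.natDegree_eq_zero.mp hnd
  obtain ⟨p, hp⟩ := aeval_X0_surj a
  refine ⟨p, ?_⟩
  apply phi2.injective
  rw [← ha, ← hp]
  have h1 : phi2 ((Polynomial.aeval (X 1 : P2)) p)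
      = Polynomial.aeval (Polynomial.C (X 0 : R1)) p := by
    rw [← phi2_X1]
    exact (Polynomial.aeval_algHom_apply phi2 (X 1 : P2) p).symm
  have h2 : Polynomial.aeval (Polynomial.C (X 0 : R1)) p
      = Polynomial.C ((Polynomial.aeval (X 0 : R1)) p) := by
    have h3 := Polynomial.aeval_algHom_apply (Polynomial.CAlgHom (R := ℂ) (A := R1)) (X 0 : R1) p
    simpa [Polynomial.CAlgHom] using h3
  rw [show toT p = Polynomial.aeval (X 1 : P2) p from rfl, h1, h2]

lemma dT_toT (p : Polynomial ℂ) : dT (toT p) = toT (Polynomial.derivative p) := by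
  induction p using Polynomial.induction_on' with
  | add p q hp hq =>
    show dT (toT (p + q)) = _
    rw [show toT (p+q) = toT p + toT q from map_add (Polynomial.aeval _) _ _]
    rw [map_add, hp, hq, Polynomial.derivative_add]
    exact (map_add (Polynomial.aeval _) _ _).symm
  | monomial n a =>
    show dT (Polynomial.aeval (X 1 : P2) (Polynomial.monomial n a)) = _
    rw [Polynomial.aeval_monomial, Polynomial.derivative_monomial]
    rw [show toT _ = Polynomial.aeval (X 1 : P2) ((Polynomial.monomial (n-1)) (a * ↑n)) from rfl]
    rw [Polynomial.aeval_monomial]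
    simp only [dT, LinearMap.coe_mk, Derivation.coeFn_coe]
    simp only [algebraMap_eq, pderiv_C_mul, pderiv_pow, pderiv_X_self, mul_one]
    cases n with
    | zero => simp
    | succ k =>
      push_cast
      simp [map_mul, map_natCast]
      ring

lemma toT_sub (p q : Polynomial ℂ) : toT (p - q) = toT p - toT q :=
  map_sub (Polynomial.aeval _) _ _

lemma toT_neg (p : Polynomial ℂ) : toT (-p) = - toT p :=
  map_neg (Polynomial.aeval _) _

lemma toT_smul (c : ℂ) (p : Polynomial ℂ) : toT (c • p) = C c * toT p := by
  rw [show toT (c • p) = Polynomial.aeval (X 1 : P2) (c • p) from rfl, map_smul]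
  rw [smul_eq_C_mul]
  rfl

end AuxLemmas



/-- `W` is an `𝔏`-submodule of `Φ(λ,α,β,γ,h)`: a subspace invariant under the action of all
`L_m, M_m, S_m, I_m`. -/
def IsLSubmodule (lam al be ga : ℂ) (h : Polynomial ℂ) (W : Submodule ℂ P2) : Prop :=
  ∀ (m : ℤ), ∀ f ∈ W, opL lam al h m f ∈ W ∧ opM lam al m f ∈ W ∧
    opS lam be m f ∈ W ∧ opI lam al be ga h m f ∈ W

section MembLemmas

open MvPolynomial

variable {lam al be ga : ℂ} {h : Polynomial ℂ} {W : Submodule ℂ P2}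

lemma mem_smul_cancel {c : ℂ} (hc : c ≠ 0) {v : P2} (hv : c • v ∈ W) : v ∈ W := by
  have h1 := W.smul_mem c⁻¹ hv
  rwa [smul_smul, inv_mul_cancel₀ hc, one_smul] at h1

lemma W_mulX1 (hW : IsLSubmodule lam al be ga h W) : ∀ f ∈ W, X 1 * f ∈ W := by
  intro f hf
  have h1 := (hW 0 f hf).2.1
  have h2 : opM lam al 0 f = X 1 * f := by
    simp [opM, mulOp, Module.End.mul_apply, LinearMap.smul_apply, LinearMap.mulLeft_apply,
      shiftS_zero]
  rwa [h2] at h1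

lemma W_mulX0 (hW : IsLSubmodule lam al be ga h W) : ∀ f ∈ W, X 0 * f ∈ W := by
  intro f hf
  have h1 := (hW 0 f hf).1
  have hm0 : hmPoly al h 0 = 0 := by simp [hmPoly]
  have h2 : opL lam al h 0 f = X 0 * f := by
    simp [opL, mulOp, LinearMap.sub_apply, Module.End.mul_apply, LinearMap.smul_apply,
      LinearMap.mulLeft_apply, shiftS_zero, hm0, toT]
  rwa [h2] at h1

lemma W_mulP (hW : IsLSubmodule lam al be ga h W) :
    ∀ p : P2, ∀ f ∈ W, p * f ∈ W := by
  intro p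
  induction p using MvPolynomial.induction_on with
  | C a =>
    intro f hf
    rw [← smul_eq_C_mul]
    exact W.smul_mem a hf
  | add p q hp hq =>
    intro f hf
    rw [add_mul]
    exact W.add_mem (hp f hf) (hq f hf)
  | mul_X p n hp =>
    intro f hf
    have hXf : X n * f ∈ W := by
      fin_cases n
      · exact W_mulX0 hW f hf
      · exact W_mulX1 hW f hf
    rw [mul_assoc]
    exact hp _ hXf

lemma W_N (hW : IsLSubmodule lam al be ga h W) (hlam : lam ≠ 0) :
    ∀ m : ℤ, ∀ f ∈ W, (X 1 - C ((m:ℂ) * al)) * shiftS m f ∈ W := by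
  intro m f hf
  have h1 := (hW m f hf).2.1
  have h2 : opM lam al m f = lam ^ m • ((X 1 - C ((m:ℂ) * al)) * shiftS m f) := by
    simp [opM, mulOp, Module.End.mul_apply, LinearMap.smul_apply, LinearMap.mulLeft_apply]
  rw [h2] at h1
  exact mem_smul_cancel (zpow_ne_zero m hlam) h1

lemma W_shift (hW : IsLSubmodule lam al be ga h W) (hlam : lam ≠ 0) (hal : al ≠ 0) :
    ∀ k : ℤ, ∀ f ∈ W, shiftS k f ∈ W := by
  intro k f hf
  set m : ℤ := if k = -1 then 1 else k + 1 with hm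
  have hm0 : m ≠ 0 := by rw [hm]; split <;> omega
  have hmk : m ≠ k := by rw [hm]; split <;> omega
  set u : P2 := shiftS k f with hu
  have h1 : (X 1 - C ((m:ℂ) * al)) * ((X 1 - C (((k-m : ℤ):ℂ) * al)) * u) ∈ W := by
    have := W_N hW hlam m _ (W_N hW hlam (k-m) f hf)
    rwa [shiftS_mul, shiftS_shiftS, show m + (k - m) = k from by ring,
      map_sub, shiftS_X1, shiftS_C] at this
  have h2 : (X 1 - C (((0:ℤ):ℂ) * al)) * ((X 1 - C (((k : ℤ):ℂ) * al)) * u) ∈ W := by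
    have := W_N hW hlam 0 _ (W_N hW hlam k f hf)
    rwa [shiftS_zero] at this
  have e1 : (X 1 - C ((m:ℂ) * al)) * ((X 1 - C (((k-m : ℤ):ℂ) * al)) * u) -
      (X 1 - C (((0:ℤ):ℂ) * al)) * ((X 1 - C (((k : ℤ):ℂ) * al)) * u)
      = ((m:ℂ) * al * (((k:ℂ) - (m:ℂ)) * al)) • u := by
    rw [smul_eq_C_mul]
    push_cast
    simp only [map_mul, map_sub, map_zero]
    ring
  have h3 : ((m:ℂ) * al * (((k:ℂ) - (m:ℂ)) * al)) • u ∈ W := by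
    rw [← e1]
    exact W.sub_mem h1 h2
  have hc : ((m:ℂ) * al * (((k:ℂ) - (m:ℂ)) * al)) ≠ 0 := by
    have hmne : (m:ℂ) ≠ 0 := Int.cast_ne_zero.mpr hm0
    have hkm : ((k:ℂ) - (m:ℂ)) ≠ 0 := by
      have : ((k - m : ℤ):ℂ) ≠ 0 := Int.cast_ne_zero.mpr (by omega)
      push_cast at this
      exact this
    exact mul_ne_zero (mul_ne_zero hmne hal) (mul_ne_zero hkm hal)
  exact mem_smul_cancel hc h3

lemma hmPoly_one : hmPoly al h 1 = h := by
  simp [hmPoly]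

lemma hmPoly_neg_one : hmPoly al h (-1) = -h - ((2:ℂ) * al) • hq al h := by
  simp only [hmPoly]
  push_cast
  module

lemma W_dT (hW : IsLSubmodule lam al be ga h W) (hlam : lam ≠ 0) (hal : al ≠ 0) :
    ∀ f ∈ W, dT f ∈ W := by
  intro f hf
  have hA : ∀ m : ℤ, (X 0 + toT (hmPoly al h m)) * f
      - C (m:ℂ) * ((X 1 - C ((m:ℂ) * al)) * dT f) ∈ W := by
    intro m
    have h1 := (hW m _ (W_shift hW hlam hal (-m) f hf)).1
    have h2 : opL lam al h m (shiftS (-m) f)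
        = lam ^ m • ((X 0 + toT (hmPoly al h m)) * f
            - C (m:ℂ) * ((X 1 - C ((m:ℂ) * al)) * dT f)) := by
      simp only [opL, mulOp, LinearMap.sub_apply, LinearMap.smul_apply, Module.End.mul_apply,
        LinearMap.mulLeft_apply]
      rw [show dT (shiftS m (shiftS (-m) f)) = dT f from by
        rw [shiftS_shiftS, show m + -m = 0 from by ring, shiftS_zero]]
      rw [shiftS_shiftS, show m + -m = 0 from by ring, shiftS_zero]
      rw [smul_sub, ← smul_eq_C_mul, smul_smul, mul_comm (lam ^ m) ((m:ℂ))]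
    rw [h2] at h1
    exact mem_smul_cancel (zpow_ne_zero m hlam) h1
  have hB : ∀ m : ℤ, toT (hmPoly al h m) * f
      - C (m:ℂ) * ((X 1 - C ((m:ℂ) * al)) * dT f) ∈ W := by
    intro m
    have h4 := W.sub_mem (hA m) (W_mulX0 hW f hf)
    have e : (X 0 + toT (hmPoly al h m)) * f - C (m:ℂ) * ((X 1 - C ((m:ℂ) * al)) * dT f)
        - X 0 * f = toT (hmPoly al h m) * f - C (m:ℂ) * ((X 1 - C ((m:ℂ) * al)) * dT f) := by
      ring
    rwa [e] at h4
  have hB1 := hB 1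
  have hBm1 := hB (-1)
  rw [hmPoly_one] at hB1
  rw [hmPoly_neg_one] at hBm1
  have hsum := W.add_mem hB1 hBm1
  have e2 : (toT h * f - C (((1:ℤ)):ℂ) * ((X 1 - C ((((1:ℤ)):ℂ) * al)) * dT f))
      + (toT (-h - ((2:ℂ) * al) • hq al h) * f
          - C (((-1:ℤ)):ℂ) * ((X 1 - C ((((-1:ℤ)):ℂ) * al)) * dT f))
      = ((2:ℂ) * al) • (dT f - toT (hq al h) * f) := by
    rw [toT_sub, toT_neg, toT_smul, smul_eq_C_mul]
    push_cast
    simp only [map_mul, map_neg, map_one, map_ofNat]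
    ring
  rw [e2] at hsum
  have h6 : dT f - toT (hq al h) * f ∈ W :=
    mem_smul_cancel (mul_ne_zero two_ne_zero hal) hsum
  have h7 := W.add_mem h6 (W_mulP hW (toT (hq al h)) f hf)
  rwa [sub_add_cancel] at h7

end MembLemmas

/-- If `α ≠ 0`, then for every `λ ∈ ℂ*`, `β, γ ∈ ℂ` and `h(t) ∈ ℂ[t]`, the
`𝔏`-module `Φ(λ,α,β,γ,h(t))` is irreducible: it has no `𝔏`-submodules other than `0` and
itself. -/
theorem stmt1 (lam : ℂ) (hlam : lam ≠ 0) (al : ℂ) (hal : al ≠ 0) (be ga : ℂ)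
    (h : Polynomial ℂ) (W : Submodule ℂ P2) (hW : IsLSubmodule lam al be ga h W) :
    W = ⊥ ∨ W = ⊤ := by
  open MvPolynomial in
  by_cases hbot : W = ⊥
  · exact Or.inl hbot
  right
  obtain ⟨f0, hf0W, hf0ne⟩ := Submodule.exists_mem_ne_zero_of_ne_bot hbot
  -- descent in the variable s
  have descent_s : ∀ n : ℕ, ∀ f, f ∈ W → f ≠ 0 → degreeOf 0 f ≤ n →
      ∃ g, g ∈ W ∧ g ≠ 0 ∧ degreeOf 0 g = 0 := by
    intro n
    induction n with
    | zero => exact fun f hf hne hdeg => ⟨f, hf, hne, Nat.le_zero.mp hdeg⟩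
    | succ n ih =>
      intro f hf hne hdeg
      by_cases h0 : degreeOf 0 f = 0
      · exact ⟨f, hf, hne, h0⟩
      · obtain ⟨hne', hlt⟩ := shift_key f (Nat.pos_of_ne_zero h0)
        exact ih _ (W.sub_mem (W_shift hW hlam hal 1 f hf) hf) hne' (by omega)
  obtain ⟨g, hgW, hgne, hgdeg⟩ := descent_s (degreeOf 0 f0) f0 hf0W hf0ne le_rfl
  obtain ⟨p, hp⟩ := repr_t g hgdeg
  have hpW : toT p ∈ W := hp ▸ hgW
  have hpne : p ≠ 0 := by
    rintro rfl
    apply hgne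
    rw [hp]
    simp [toT]
  -- descent in the variable t
  have base : ∀ q : Polynomial ℂ, q ≠ 0 → toT q ∈ W → q.natDegree = 0 → (1:P2) ∈ W := by
    intro q hqne hqW hqdeg
    obtain ⟨c, hc⟩ := Polynomial.natDegree_eq_zero.mp hqdeg
    have hcne : c ≠ 0 := by
      rintro rfl
      apply hqne
      rw [← hc]
      simp
    have h1 : toT q = c • (1:P2) := by
      rw [← hc]
      simp [toT]
      rw [smul_eq_C_mul, mul_one]
    rw [h1] at hqW
    exact mem_smul_cancel hcne hqW
  have descent_t : ∀ n : ℕ, ∀ q : Polynomial ℂ, q ≠ 0 → toT q ∈ W → q.natDegree ≤ n →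
      (1:P2) ∈ W := by
    intro n
    induction n with
    | zero => exact fun q hqne hqW hqdeg => base q hqne hqW (Nat.le_zero.mp hqdeg)
    | succ n ih =>
      intro q hqne hqW hqdeg
      by_cases h0 : q.natDegree = 0
      · exact base q hqne hqW h0
      · have hd := W_dT hW hlam hal _ hqW
        rw [dT_toT] at hd
        have hdne : Polynomial.derivative q ≠ 0 := fun hzero =>
          h0 (Polynomial.natDegree_eq_zero_of_derivative_eq_zero hzero)
        have hlt := Polynomial.natDegree_derivative_lt h0
        exact ih _ hdne hd (by omega)
  have h1W : (1:P2) ∈ W := descent_t p.natDegree p hpne hpW le_rfl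
  rw [eq_top_iff]
  intro q _
  have hq1 := W_mulP hW q 1 h1W
  rwa [mul_one] at hq1

end
end

section
/- Let λ ∈ ℂ*, α ∈ ℂ, h(t) ∈ ℂ[t], and let M be an 𝔏-module whose underlying space is ℂ[x,y], on which L_m·f(x,y) = λ^m (x + h_m(y)) f(x−m,y) − m λ^m (y − mα) ∂_y(f(x−m,y)) and M_m·f(x,y) = λ^m (y − mα) f(x−m,y) for all m ∈ ℤ. If β ∈ ℂ is the constant with S_0·1 = β, then S_m·1 = λ^m β for every m ∈ ℤ. -/
noncomputable section

/-- A module over the BMS-Kac-Moody algebra `𝔏`, given by the actions of the basis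
elements `L_m, M_m, S_m, I_m` subject to the defining commutation relations of `𝔏`. -/
structure LAction (V : Type) [AddCommGroup V] [Module ℂ V] where
  L : ℤ → Module.End ℂ V
  M : ℤ → Module.End ℂ V
  S : ℤ → Module.End ℂ V
  I : ℤ → Module.End ℂ V
  hLL : ∀ m n : ℤ, ⁅L m, L n⁆ = ((n : ℂ) - (m : ℂ)) • L (m + n)
  hLM : ∀ m n : ℤ, ⁅L m, M n⁆ = ((n : ℂ) - (m : ℂ)) • M (m + n)
  hLS : ∀ m n : ℤ, ⁅L m, S n⁆ = (n : ℂ) • S (m + n)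
  hLI : ∀ m n : ℤ, ⁅L m, I n⁆ = (n : ℂ) • I (m + n)
  hMI : ∀ m n : ℤ, ⁅M m, I n⁆ = -((n : ℂ) • S (m + n))
  hMM : ∀ m n : ℤ, ⁅M m, M n⁆ = 0
  hMS : ∀ m n : ℤ, ⁅M m, S n⁆ = 0
  hSS : ∀ m n : ℤ, ⁅S m, S n⁆ = 0
  hSI : ∀ m n : ℤ, ⁅S m, I n⁆ = 0
  hII : ∀ m n : ℤ, ⁅I m, I n⁆ = 0

/-- `ℂ[x,y] ≅ U(ℂL₀ ⊕ ℂM₀)`, realized as `(ℂ[x])[y]`. -/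
abbrev PP : Type := Polynomial (Polynomial ℂ)

/-- Evaluation `f(x,y) ↦ f(A,B)` of a two-variable polynomial at a pair of commuting
endomorphisms (`x ↦ A`, `y ↦ B`, with `A`-powers written to the left). -/
def ev2 {V : Type} [AddCommGroup V] [Module ℂ V] (A B : Module.End ℂ V) (f : PP) :
    Module.End ℂ V :=
  Polynomial.eval₂ (Polynomial.aeval A).toRingHom B f

/-- The substitution `f(x,y) ↦ f(x-m,y)` on `ℂ[x,y] = (ℂ[x])[y]`. -/
def shiftX (m : ℤ) (f : PP) : PP :=
  f.map (Polynomial.aeval (Polynomial.X - Polynomial.C (m : ℂ)) :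
    Polynomial ℂ →ₐ[ℂ] Polynomial ℂ).toRingHom


-- basic lemmas
lemma shiftS_zero_s13 : shiftS 0 = LinearMap.id := by
  have h : (MvPolynomial.aeval ![MvPolynomial.X 0 - MvPolynomial.C ((0:ℤ) : ℂ), MvPolynomial.X 1] :
      P2 →ₐ[ℂ] P2) = AlgHom.id ℂ P2 := by
    apply MvPolynomial.algHom_ext
    intro i
    fin_cases i <;> simp
  rw [shiftS, h]; rfl

lemma shiftS_one_val (m : ℤ) : shiftS m (1 : P2) = 1 := by
  simp [shiftS]

lemma dT_one : dT (1 : P2) = 0 := by simp [dT]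

lemma mulOp_apply (p q : P2) : mulOp p q = p * q := rfl

lemma toT_X_sub_C (c : ℂ) :
    toT (Polynomial.X - Polynomial.C c) = MvPolynomial.X 1 - MvPolynomial.C c := by
  simp [toT]

lemma X1_sub_C_ne (c : ℂ) : (MvPolynomial.X 1 - MvPolynomial.C c : P2) ≠ 0 := by
  intro hcon
  have := congrArg (MvPolynomial.eval (fun _ => c + 1)) hcon
  simp at this

lemma opM_zero (lam al : ℂ) : opM lam al 0 = mulOp (MvPolynomial.X 1) := by
  simp [opM, shiftS_zero_s13, Module.End.mul_eq_comp, LinearMap.comp_id]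

lemma hmPoly_zero (al : ℂ) (h : Polynomial ℂ) : hmPoly al h 0 = 0 := by
  simp [hmPoly]

lemma opL_zero (lam al : ℂ) (h : Polynomial ℂ) : opL lam al h 0 = mulOp (MvPolynomial.X 0) := by
  simp [opL, hmPoly_zero, toT, shiftS_zero_s13, Module.End.mul_eq_comp, LinearMap.comp_id]

section Act
variable (lam al : ℂ) (h : Polynomial ℂ) (ρ : LAction P2)

lemma S_mulX1 (hM : ∀ m : ℤ, ρ.M m = opM lam al m) (m : ℤ) (p : P2) :
    ρ.S m (MvPolynomial.X 1 * p) = MvPolynomial.X 1 * ρ.S m p := by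
  have hc := ρ.hMS 0 m
  rw [Ring.lie_def, sub_eq_zero, hM, opM_zero] at hc
  have := congrFun (congrArg DFunLike.coe hc) p
  simpa [mulOp_apply, Module.End.mul_apply] using this.symm

lemma S_toT (hM : ∀ m : ℤ, ρ.M m = opM lam al m) (m : ℤ) (p : Polynomial ℂ) :
    ρ.S m (toT p) = toT p * ρ.S m 1 := by
  induction p using Polynomial.induction_on with
  | C c =>
      have h1 : toT (Polynomial.C c) = c • (1 : P2) := by
        simp [toT, MvPolynomial.smul_eq_C_mul, Polynomial.aeval_C, Algebra.algebraMap_eq_smul_one]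
      rw [h1, map_smul, MvPolynomial.smul_eq_C_mul, MvPolynomial.smul_eq_C_mul]
      ring
  | add p q hp hq2 =>
      have h1 : toT (p + q) = toT p + toT q := by simp [toT]
      rw [h1, map_add, hp, hq2, add_mul]
  | monomial n a ih =>
      have h1 : toT (Polynomial.C a * Polynomial.X ^ (n + 1)) =
          MvPolynomial.X 1 * toT (Polynomial.C a * Polynomial.X ^ n) := by
        simp only [toT, map_mul, map_pow, Polynomial.aeval_X, pow_succ]
        ring
      rw [h1, S_mulX1 lam al ρ hM, ih]
      ring

lemma opM_apply (m : ℤ) (p : P2) :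
    opM lam al m p = lam ^ m •
      ((MvPolynomial.X 1 - MvPolynomial.C ((m : ℂ) * al)) * shiftS m p) := by
  simp [opM, Module.End.mul_apply, mulOp_apply]

lemma opL_apply (m : ℤ) (p : P2) :
    opL lam al h m p = lam ^ m •
        ((MvPolynomial.X 0 + toT (hmPoly al h m)) * shiftS m p)
      - ((m : ℂ) * lam ^ m) •
        ((MvPolynomial.X 1 - MvPolynomial.C ((m : ℂ) * al)) * dT (shiftS m p)) := by
  simp [opL, Module.End.mul_apply, mulOp_apply]

lemma opL_one (m : ℤ) :
    opL lam al h m 1 = lam ^ m • (MvPolynomial.X 0 + toT (hmPoly al h m)) := by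
  rw [opL_apply, shiftS_one_val, dT_one, mul_one, mul_zero, smul_zero, sub_zero]

lemma shift_g (hlam : lam ≠ 0) (hM : ∀ m : ℤ, ρ.M m = opM lam al m) (m n : ℤ) :
    shiftS n (ρ.S m 1) = ρ.S m 1 := by
  have hc := ρ.hMS n m
  rw [Ring.lie_def, sub_eq_zero, hM] at hc
  have happ := congrFun (congrArg DFunLike.coe hc) (1 : P2)
  simp only [Module.End.mul_apply] at happ
  rw [opM_apply, opM_apply, shiftS_one_val, mul_one, map_smul] at happ
  have h2 : ρ.S m (MvPolynomial.X 1 - MvPolynomial.C ((n : ℂ) * al)) =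
      (MvPolynomial.X 1 - MvPolynomial.C ((n : ℂ) * al)) * ρ.S m 1 := by
    rw [← toT_X_sub_C]; exact S_toT lam al ρ hM m _
  rw [h2] at happ
  have h3 := smul_right_injective P2 (zpow_ne_zero n hlam) happ
  exact mul_left_cancel₀ (X1_sub_C_ne _) h3

lemma S_X0 (hL : ∀ m : ℤ, ρ.L m = opL lam al h m) (m : ℤ) :
    ρ.S m (MvPolynomial.X 0) = MvPolynomial.X 0 * ρ.S m 1 - (m : ℂ) • ρ.S m 1 := by
  have hc := ρ.hLS 0 m
  rw [Ring.lie_def, hL 0, opL_zero] at hc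
  have happ := congrFun (congrArg DFunLike.coe hc) (1 : P2)
  simp only [LinearMap.sub_apply, Module.End.mul_apply, mulOp_apply, mul_one,
    LinearMap.smul_apply, zero_add] at happ
  linear_combination (norm := module) -happ

lemma star (hlam : lam ≠ 0) (hL : ∀ m : ℤ, ρ.L m = opL lam al h m)
    (hM : ∀ m : ℤ, ρ.M m = opM lam al m) (m n : ℤ) :
    MvPolynomial.C (m : ℂ) * ρ.S (n + m) 1
      = MvPolynomial.C (lam ^ n * (m : ℂ)) * ρ.S m 1
        - MvPolynomial.C ((n : ℂ) * lam ^ n) *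
            ((MvPolynomial.X 1 - MvPolynomial.C ((n : ℂ) * al)) * dT (ρ.S m 1)) := by
  have hc := ρ.hLS n m
  rw [Ring.lie_def, hL n] at hc
  have happ := congrFun (congrArg DFunLike.coe hc) (1 : P2)
  simp only [LinearMap.sub_apply, LinearMap.smul_apply, Module.End.mul_apply] at happ
  rw [opL_apply, opL_one, shift_g lam al ρ hlam hM, map_smul, map_add,
    S_X0 lam al h ρ hL, S_toT lam al ρ hM] at happ
  simp only [MvPolynomial.smul_eq_C_mul, MvPolynomial.C_mul] at happ ⊢
  linear_combination -happ

end Act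

def psi (a : ℂ) : P2 →ₐ[ℂ] Polynomial ℂ :=
  MvPolynomial.aeval ![Polynomial.C a, Polynomial.X]

lemma psi_dT (a : ℂ) (p : P2) : psi a (dT p) = Polynomial.derivative (psi a p) := by
  induction p using MvPolynomial.induction_on with
  | C c => simp [dT, psi]
  | add p q hp hq2 => simp only [map_add, hp, hq2]
  | mul_X p i hp =>
      have hmul : dT (p * MvPolynomial.X i) =
          dT p * MvPolynomial.X i + p * dT (MvPolynomial.X i) := by
        simp only [dT, LinearMap.coe_mk, AddHom.coe_mk, Derivation.coeFn_coe,
          MvPolynomial.pderiv_mul]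
      rw [hmul, map_add, map_mul, map_mul, hp, map_mul, Polynomial.derivative_mul]
      fin_cases i <;> simp [dT, psi]

lemma dT_mul (p q : P2) : dT (p * q) = dT p * q + p * dT q := by
  simp only [dT, Derivation.coeFn_coe, LinearMap.coe_mk, AddHom.coe_mk]
  exact MvPolynomial.pderiv_mul

lemma dT_X1sub (c : ℂ) : dT (MvPolynomial.X 1 - MvPolynomial.C c) = 1 := by
  simp [dT]

lemma onevar (al : ℂ) (r : Polynomial ℂ)
    (heq : (Polynomial.X - Polynomial.C al) ^ 2 * Polynomial.derivative r
      + (Polynomial.C 2 * Polynomial.X - Polynomial.C (6 * al)) * r = 0) : r = 0 := by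
  open Polynomial in
  by_contra hr
  by_cases hd0 : Polynomial.derivative r = 0
  · rw [hd0, mul_zero, zero_add] at heq
    have h2 : (Polynomial.C 2 * Polynomial.X - Polynomial.C (6 * al) : Polynomial ℂ) ≠ 0 := by
      intro hcon
      have := congrArg (fun p => Polynomial.coeff p 1) hcon
      simp at this
    rcases mul_eq_zero.mp heq with hx | hx
    · exact h2 hx
    · exact hr hx
  · set d := r.natDegree with hdd
    have hd1 : 1 ≤ d := by
      by_contra hcon
      exact hd0 (Polynomial.derivative_of_natDegree_zero (by omega))
    simp only [Polynomial.C_mul, map_ofNat] at heq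
    have heq2 : Polynomial.derivative r * Polynomial.X ^ 2
        - (2 : ℂ) • (Polynomial.C al * (Polynomial.derivative r * Polynomial.X ^ 1))
        + Polynomial.C al * (Polynomial.C al * Polynomial.derivative r)
        + (2 : ℂ) • (r * Polynomial.X ^ 1)
        - (6 : ℂ) • (Polynomial.C al * r) = 0 := by
      simp only [Polynomial.smul_eq_C_mul, map_ofNat]
      linear_combination heq
    have hco := congrArg (fun p => Polynomial.coeff p (d + 1)) heq2
    have hz1 : r.coeff (d + 1) = 0 :=
      Polynomial.coeff_eq_zero_of_natDegree_lt (by omega)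
    have hz2 : r.coeff (d + 2) = 0 :=
      Polynomial.coeff_eq_zero_of_natDegree_lt (by omega)
    simp only [Polynomial.coeff_sub, Polynomial.coeff_add, Polynomial.coeff_C_mul,
      Polynomial.coeff_smul, Polynomial.coeff_mul_X_pow', Polynomial.coeff_derivative,
      Polynomial.coeff_zero, smul_eq_mul,
      if_pos (show (2:ℕ) ≤ d + 1 by omega), if_pos (show (1:ℕ) ≤ d + 1 by omega)] at hco
    have e1 : d + 1 - 2 = d - 1 := by omega
    have e2 : d + 1 - 1 = d := by omega
    have e3 : d - 1 + 1 = d := by omega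
    rw [e1, e2, e3, hz1, hz2] at hco
    have hc : r.coeff d ≠ 0 := by
      simpa [hdd] using Polynomial.leadingCoeff_ne_zero.mpr hr
    have hfin : r.coeff d * (((d - 1 : ℕ) : ℂ) + 3) = 0 := by linear_combination hco
    have hne : (((d - 1 : ℕ) : ℂ) + 3) ≠ 0 := by
      have h4 : (((d - 1 + 3 : ℕ)) : ℂ) ≠ 0 := Nat.cast_ne_zero.mpr (by omega)
      push_cast at h4
      convert h4 using 2
    exact hc (by 
      rcases mul_eq_zero.mp hfin with hx | hx
      · exact hx
      · exact absurd hx hne)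

lemma dT_C (c : ℂ) : dT (MvPolynomial.C c : P2) = 0 := by simp [dT]

lemma eval_eq_psi (x : Fin 2 → ℂ) (p : P2) :
    MvPolynomial.eval x p = Polynomial.eval (x 1) (psi (x 0) p) := by
  induction p using MvPolynomial.induction_on with
  | C c => simp [psi]
  | add p q hp hq2 => simp [map_add, hp, hq2]
  | mul_X p i hp =>
      rw [map_mul, map_mul, hp, Polynomial.eval_mul]
      congr 1
      fin_cases i <;> simp [psi]

lemma D_zero (al : ℂ) (D : P2) (keyE : (MvPolynomial.X 1 - MvPolynomial.C al) ^ 2 * dT D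
      + (MvPolynomial.C 2 * MvPolynomial.X 1 - MvPolynomial.C (6 * al)) * D = 0) :
    D = 0 := by
  have hpsi : ∀ a : ℂ, psi a D = 0 := by
    intro a
    apply onevar al
    have hmap := congrArg (psi a) keyE
    have hX1 : psi a (MvPolynomial.X 1) = Polynomial.X := by simp [psi]
    have hC : ∀ c : ℂ, psi a (MvPolynomial.C c) = Polynomial.C c := by
      intro c; simp [psi, MvPolynomial.algebraMap_eq, Polynomial.algebraMap_eq]
    rw [map_add, map_mul, map_mul, map_pow, map_sub, map_sub, map_mul, hX1, hC, hC, hC,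
      psi_dT, map_zero] at hmap
    exact hmap
  apply MvPolynomial.funext (q := 0)
  intro x
  rw [eval_eq_psi, hpsi, map_zero, Polynomial.eval_zero]


open MvPolynomial in
/-- Let `λ ∈ ℂ*`, `α ∈ ℂ`, `h(t) ∈ ℂ[t]`, and let `M` be an `𝔏`-module
with underlying space `ℂ[x,y]` on which `L_m` and `M_m` act by the `Φ`-formulas. If `β ∈ ℂ`
is the constant with `S₀·1 = β`, then `S_m·1 = λ^m β` for every `m ∈ ℤ`. -/
theorem stmt13 (lam : ℂ) (hlam : lam ≠ 0) (al : ℂ) (h : Polynomial ℂ)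
    (ρ : LAction P2)
    (hL : ∀ m : ℤ, ρ.L m = opL lam al h m)
    (hM : ∀ m : ℤ, ρ.M m = opM lam al m)
    (be : ℂ) (hbe : ρ.S 0 (1 : P2) = MvPolynomial.C be) :
    ∀ m : ℤ, ρ.S m (1 : P2) = MvPolynomial.C (lam ^ m * be) := by
  have hst := star lam al h ρ hlam hL hM
  set D : P2 := dT (ρ.S 1 1) with hDdef
  set E : P2 := dT D with hEdef
  have s11 := hst 1 1
  have s12 := hst 1 2
  have s21 := hst 2 1
  have hz2 : lam ^ (2:ℤ) = lam * lam := by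
    rw [show (2:ℤ) = 1 + 1 by ring, zpow_add₀ hlam, zpow_one]
  simp only [Int.cast_one, Int.cast_two, zpow_one, one_mul, mul_one, MvPolynomial.C_1,
    hz2, MvPolynomial.C_mul] at s11 s12 s21
  norm_num at s11 s12 s21
  simp only [map_ofNat] at s12 s21
  -- s11 : ρ.S 2 1 = C lam * ρ.S 1 1 - C lam * ((X 1 - C al) * D)
  have hT : dT (ρ.S 2 1)
      = MvPolynomial.C lam * D - MvPolynomial.C lam * (D + (X 1 - C al) * E) := by
    rw [s11, map_sub, dT_mul, dT_mul, dT_C, dT_mul, dT_X1sub, hEdef]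
    ring
  have keyE' : MvPolynomial.C lam * MvPolynomial.C lam *
      ((X 1 - C al) ^ 2 * E + ((2:P2) * X 1 - (6:P2) * C al) * D) = 0 := by
    linear_combination (-2 * MvPolynomial.C lam) * s11 + 2 * s12 - s21
      + (MvPolynomial.C lam * (X 1 - C al)) * hT
  have keyE : (X 1 - C al) ^ 2 * E + (C 2 * X 1 - C (6 * al)) * D = 0 := by
    have hCne : (MvPolynomial.C lam : P2) ≠ 0 := by
      simpa using hlam
    have hform : (C 2 * X 1 - C (6 * al) : P2) = (2:P2) * X 1 - (6:P2) * C al := by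
      rw [C_mul]; simp [map_ofNat]
    rw [hform]
    rcases mul_eq_zero.mp keyE' with hx | hx
    · exact absurd (by rcases mul_eq_zero.mp hx with hy | hy <;> exact hy) hCne
    · exact hx
  have hD : D = 0 := D_zero al D (by rw [← hEdef]; exact keyE)
  have key1 : ∀ n : ℤ, ρ.S (n + 1) 1 = MvPolynomial.C (lam ^ n) * ρ.S 1 1 := by
    intro n
    have hn := hst 1 n
    rw [← hDdef, hD] at hn
    simpa [Int.cast_one] using hn
  have hg1 : ρ.S 1 1 = MvPolynomial.C (lam * be) := by
    have h0 := key1 (-1)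
    norm_num at h0
    rw [hbe] at h0
    have := congrArg (fun p => MvPolynomial.C lam * p) h0
    rw [← mul_assoc, ← C_mul, ← C_mul] at this
    rw [mul_inv_cancel₀ hlam] at this
    simpa using this.symm
  intro m
  have hm := key1 (m - 1)
  rw [show m - 1 + 1 = m by ring, hg1, ← C_mul] at hm
  rw [hm]
  congr 1
  rw [← mul_assoc, ← zpow_add_one₀ hlam, show m - 1 + 1 = m by ring]


end
end
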